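/- Let A and B be nonempty weakly compact convex subsets of a Banach space X such that (A,B) is a sharp proximinal pair, and let T : A ∪ B → A ∪ B be a cyclic map with T(A₀) ⊆ B₀ and T(B₀) ⊆ A₀. Then there exists a pair (F1,F2) of nonempty closed convex subsets F1 ⊆ A₀, F2 ⊆ B₀ such that (F1,F2) is a proximinal pair, T(F1) ⊆ F2, T(F2) ⊆ F1, d(F1,F2) = d(A,B), and (F1,F2) is minimal with respect to componentwise set inclusion among all pairs with these properties. -/

import Mathlib

open Set Filter Topology

noncomputable section

variable {X : Type*} [NormedAddCommGroup X] [NormedSpace ℝ X]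

/-- `d(A,B) = inf {‖x-y‖ : x ∈ A, y ∈ B}` -/
def pairDist (A B : Set X) : ℝ := sInf {r | ∃ x ∈ A, ∃ y ∈ B, r = ‖x - y‖}

/-- `δ(x,S) = r_x(S) = sup {‖x-s‖ : s ∈ S}` -/
def ptDelta (x : X) (S : Set X) : ℝ := sSup {r | ∃ s ∈ S, r = ‖x - s‖}

/-- `δ(A,B) = sup {‖x-y‖ : x ∈ A, y ∈ B}` -/
def pairDelta (A B : Set X) : ℝ := sSup {r | ∃ x ∈ A, ∃ y ∈ B, r = ‖x - y‖}

/-- `T` is a cyclic map on `A ∪ B`. -/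
def IsCyclicMap (T : X → X) (A B : Set X) : Prop := MapsTo T A B ∧ MapsTo T B A

/-- `O²(x) = {T^{2n} x : n ∈ ℕ ∪ {0}}` -/
def orbit2 (T : X → X) (x : X) : Set X := Set.range fun n : ℕ => T^[2 * n] x

/-- `(x,y)` is a best proximity pair for `T`. -/
def IsBestProximityPair (T : X → X) (A B : Set X) (x y : X) : Prop :=
  x ∈ A ∧ y ∈ B ∧ ‖x - T x‖ = pairDist A B ∧ ‖y - T y‖ = pairDist A B

def HasBestProximityPair (T : X → X) (A B : Set X) : Prop :=
  ∃ x y, IsBestProximityPair T A B x y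

/-- `(A,B)` is a proximinal pair. -/
def ProximinalPair (A B : Set X) : Prop :=
  (∀ x ∈ A, ∃ y ∈ B, ‖x - y‖ = pairDist A B) ∧
  (∀ y ∈ B, ∃ x ∈ A, ‖x - y‖ = pairDist A B)

/-- `(A,B)` is a sharp proximinal pair. -/
def SharpProximinalPair (A B : Set X) : Prop :=
  (∀ x ∈ A, ∃! y, y ∈ B ∧ ‖x - y‖ = pairDist A B) ∧
  (∀ y ∈ B, ∃! x, x ∈ A ∧ ‖x - y‖ = pairDist A B)

/-- A set is weakly compact if it is compact in the weak topology. -/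
def WeaklyCompact (A : Set X) : Prop := IsCompact (toWeakSpace ℝ X '' A)

/-- `T` is relatively orbital nonexpansive. -/
def RelOrbitalNonexpansive (T : X → X) (A B : Set X) : Prop :=
  IsCyclicMap T A B ∧
  (∀ x ∈ A, ∀ y ∈ B, ‖x - y‖ = pairDist A B → ‖T x - T y‖ = pairDist A B) ∧
  (∀ x ∈ A, ∀ y ∈ B,
    ‖T x - T y‖ ≤ min (ptDelta x (orbit2 T y)) (ptDelta y (orbit2 T x)))

/-- `(A,B)` has weak proximal normal structure. -/
def WeakProximalNormalStructure (A B : Set X) : Prop :=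
  Convex ℝ A ∧ Convex ℝ B ∧
  ∀ H1 H2 : Set X, H1.Nonempty → H2.Nonempty → H1 ⊆ A → H2 ⊆ B →
    WeaklyCompact H1 → WeaklyCompact H2 → Convex ℝ H1 → Convex ℝ H2 →
    ProximinalPair H1 H2 → pairDist H1 H2 = pairDist A B →
    pairDist H1 H2 < pairDelta H1 H2 →
    ∃ x ∈ H1, ∃ y ∈ H2,
      ptDelta x H2 < pairDelta H1 H2 ∧ ptDelta y H1 < pairDelta H1 H2

/-- `A₀ = {x ∈ A : ∃ y ∈ B, ‖x - y‖ = d(A,B)}` -/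
def proxSubA (A B : Set X) : Set X := {x ∈ A | ∃ y ∈ B, ‖x - y‖ = pairDist A B}

/-- `B₀ = {y ∈ B : ∃ x ∈ A, ‖x - y‖ = d(A,B)}` -/
def proxSubB (A B : Set X) : Set X := {y ∈ B | ∃ x ∈ A, ‖x - y‖ = pairDist A B}


set_option linter.unusedSectionVars false

section Aux

noncomputable def ofWeak : WeakSpace ℝ X → X := (toWeakSpace ℝ X).symm

instance : T2Space (WeakSpace ℝ X) := by
  have h : Function.Injective (fun (z : WeakSpace ℝ X) (f : X →L[ℝ] ℝ) => f (ofWeak z)) := by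
    intro a b hab
    have hall : ∀ f : X →L[ℝ] ℝ, f (ofWeak a - ofWeak b) = 0 := by
      intro f
      have := congrFun hab f
      simp only [map_sub, this, sub_self]
    by_contra hne
    have h0 : ofWeak a - ofWeak b ≠ 0 := by
      intro h0
      exact hne ((toWeakSpace ℝ X).symm.injective (sub_eq_zero.mp h0))
    obtain ⟨f, hf⟩ := SeparatingDual.exists_ne_zero (R := ℝ) h0
    exact hf (hall f)
  have hc : Continuous (fun (z : WeakSpace ℝ X) (f : X →L[ℝ] ℝ) => f (ofWeak z)) := by
    apply continuous_pi
    intro f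
    exact WeakBilin.eval_continuous _ f
  exact T2Space.of_injective_continuous h hc

theorem lsc_norm_weak : LowerSemicontinuous (fun z : WeakSpace ℝ X => ‖ofWeak z‖) := by
  intro x c hc
  rcases le_or_gt 0 c with h0 | h0
  · have hx0 : ofWeak x ≠ 0 := by
      intro h; simp only [h, norm_zero] at hc; exact absurd hc (not_lt.mpr h0)
    obtain ⟨g, hg1, hgx⟩ := exists_dual_vector ℝ (ofWeak x) (norm_ne_zero_iff.mpr hx0)
    have hopen : IsOpen {z : WeakSpace ℝ X | c < g (ofWeak z)} := by
      have : Continuous fun z : WeakSpace ℝ X => g (ofWeak z) :=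
        WeakBilin.eval_continuous _ g
      exact isOpen_lt continuous_const this
    have hmem : x ∈ {z : WeakSpace ℝ X | c < g (ofWeak z)} := by
      simp only [Set.mem_setOf_eq, hgx]; exact hc
    filter_upwards [hopen.mem_nhds hmem] with z hz
    calc c < g (ofWeak z) := hz
    _ ≤ ‖g (ofWeak z)‖ := le_abs_self _
    _ ≤ ‖g‖ * ‖ofWeak z‖ := g.le_opNorm _
    _ = ‖ofWeak z‖ := by rw [hg1, one_mul]
  · filter_upwards with z
    exact lt_of_lt_of_le h0 (norm_nonneg _)

theorem pairDistSet_nonempty {A B : Set X} (hA : A.Nonempty) (hB : B.Nonempty) :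
    {r | ∃ x ∈ A, ∃ y ∈ B, r = ‖x - y‖}.Nonempty := by
  obtain ⟨a, ha⟩ := hA; obtain ⟨b, hb⟩ := hB
  exact ⟨‖a - b‖, a, ha, b, hb, rfl⟩

theorem pairDistSet_bddBelow (A B : Set X) :
    BddBelow {r | ∃ x ∈ A, ∃ y ∈ B, r = ‖x - y‖} := by
  refine ⟨0, fun r hr => ?_⟩
  obtain ⟨x, _, y, _, rfl⟩ := hr
  exact norm_nonneg _

theorem pairDist_le' {A B : Set X} {x y : X} (hx : x ∈ A) (hy : y ∈ B) :
    pairDist A B ≤ ‖x - y‖ :=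
  csInf_le (pairDistSet_bddBelow A B) ⟨x, hx, y, hy, rfl⟩

theorem le_pairDist {A B : Set X} {c : ℝ} (hA : A.Nonempty) (hB : B.Nonempty)
    (h : ∀ x ∈ A, ∀ y ∈ B, c ≤ ‖x - y‖) : c ≤ pairDist A B := by
  refine le_csInf (pairDistSet_nonempty hA hB) ?_
  rintro r ⟨x, hx, y, hy, rfl⟩
  exact h x hx y hy

theorem pairDist_mono {A' B' A B : Set X} (hA' : A'.Nonempty) (hB' : B'.Nonempty)
    (h1 : A' ⊆ A) (h2 : B' ⊆ B) : pairDist A B ≤ pairDist A' B' :=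
  le_pairDist hA' hB' fun x hx y hy => pairDist_le' (h1 hx) (h2 hy)

/-- min attainment of a nonneg lsc function on a nonempty compact set in a T2 space. -/
theorem lsc_exists_min {Y : Type*} [TopologicalSpace Y] [T2Space Y] {f : Y → ℝ}
    (hf : LowerSemicontinuous f) (h0 : ∀ y, 0 ≤ f y) {K : Set Y} (hK : IsCompact K)
    (hne : K.Nonempty) : ∃ x ∈ K, ∀ y ∈ K, f x ≤ f y := by
  set m := sInf (f '' K) with hm
  have hbdd : BddBelow (f '' K) := ⟨0, by rintro r ⟨y, -, rfl⟩; exact h0 y⟩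
  have hmne : (f '' K).Nonempty := hne.image f
  set t : ℕ → Set Y := fun n => {x ∈ K | f x ≤ m + 1 / (n + 1)} with ht
  have htne : ∀ n : ℕ, (t n).Nonempty := by
    intro n
    have hlt : m < m + 1 / ((n : ℝ) + 1) := by
      have : (0:ℝ) < 1 / ((n : ℝ) + 1) := by positivity
      linarith
    obtain ⟨r, ⟨y, hy, rfl⟩, hr⟩ := exists_lt_of_csInf_lt hmne hlt
    exact ⟨y, hy, hr.le⟩
  have htc : ∀ n, IsClosed (t n) := fun n =>
    hK.isClosed.inter (hf.isClosed_preimage _)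
  have htcomp : IsCompact (t 0) := hK.of_isClosed_subset (htc 0) fun x hx => hx.1
  have htmono : ∀ n, t (n + 1) ⊆ t n := by
    intro n x hx
    refine ⟨hx.1, hx.2.trans (add_le_add_right ?_ m)⟩
    apply div_le_div_of_nonneg_left one_pos.le (by positivity)
    push_cast; linarith
  obtain ⟨x, hx⟩ := IsCompact.nonempty_iInter_of_sequence_nonempty_isCompact_isClosed
    t htmono htne htcomp htc
  simp only [Set.mem_iInter] at hx
  refine ⟨x, (hx 0).1, fun y hy => ?_⟩
  have hfx : f x ≤ m := by
    by_contra hlt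
    push_neg at hlt
    obtain ⟨n, hn⟩ := exists_nat_one_div_lt (by linarith : 0 < f x - m)
    have h2 : f x ≤ m + 1 / (n + 1) := (hx n).2
    linarith [hn]
  exact hfx.trans (csInf_le hbdd ⟨y, hy, rfl⟩)

end Aux

theorem WeaklyCompact.isClosed {A : Set X} (hA : WeaklyCompact A) : IsClosed A := by
  have h1 : IsClosed (toWeakSpace ℝ X '' A) := IsCompact.isClosed hA
  have h2 : A = toWeakSpaceCLM ℝ X ⁻¹' (toWeakSpace ℝ X '' A) := by
    ext x
    constructor
    · intro hx; exact ⟨x, hx, rfl⟩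
    · rintro ⟨y, hy, hxy⟩
      have : y = x := (toWeakSpace ℝ X).injective hxy
      rwa [← this]
  rw [h2]
  exact h1.preimage (toWeakSpaceCLM ℝ X).continuous

theorem WeaklyCompact.of_subset {A C : Set X} (hA : WeaklyCompact A) (hCA : C ⊆ A)
    (hCc : IsClosed C) (hCconv : Convex ℝ C) : WeaklyCompact C := by
  have himg : IsClosed (toWeakSpace ℝ X '' C) := by
    have := hCconv.toWeakSpace_closure (𝕜 := ℝ)
    rw [hCc.closure_eq] at this
    rw [this]
    exact isClosed_closure
  exact hA.of_isClosed_subset himg (Set.image_mono hCA)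

theorem exists_pairDist_attained {A B : Set X} (hAw : WeaklyCompact A) (hBw : WeaklyCompact B)
    (hAne : A.Nonempty) (hBne : B.Nonempty) :
    ∃ x ∈ A, ∃ y ∈ B, ‖x - y‖ = pairDist A B := by
  set f : WeakSpace ℝ X × WeakSpace ℝ X → ℝ := fun p => ‖ofWeak (p.1 - p.2)‖ with hf
  have hlsc : LowerSemicontinuous f := by
    intro p c hc
    have hcont : Continuous fun p : WeakSpace ℝ X × WeakSpace ℝ X => p.1 - p.2 :=
      continuous_fst.sub continuous_snd
    exact (hcont.tendsto p).eventually (lsc_norm_weak (p.1 - p.2) c hc)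
  have h0 : ∀ p, 0 ≤ f p := fun p => norm_nonneg _
  have hK : IsCompact ((toWeakSpace ℝ X '' A) ×ˢ (toWeakSpace ℝ X '' B)) := hAw.prod hBw
  have hKne : ((toWeakSpace ℝ X '' A) ×ˢ (toWeakSpace ℝ X '' B)).Nonempty :=
    (hAne.image _).prod (hBne.image _)
  obtain ⟨p, hp, hmin⟩ := lsc_exists_min hlsc h0 hK hKne
  obtain ⟨⟨a, ha, ha'⟩, ⟨b, hb, hb'⟩⟩ := hp
  refine ⟨a, ha, b, hb, le_antisymm ?_ (pairDist_le' ha hb)⟩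
  refine le_pairDist ⟨a, ha⟩ ⟨b, hb⟩ fun u hu v hv => ?_
  have := hmin (toWeakSpace ℝ X u, toWeakSpace ℝ X v) ⟨⟨u, hu, rfl⟩, ⟨v, hv, rfl⟩⟩
  simp only [hf, ← ha', ← hb'] at this ⊢
  have heq : ∀ w z : X, ofWeak (toWeakSpace ℝ X w - toWeakSpace ℝ X z) = w - z := by
    intro w z
    simp [ofWeak, map_sub]
  rwa [heq, heq] at this

theorem exists_nearest {B : Set X} (hBw : WeaklyCompact B) (hBne : B.Nonempty) (x : X) :
    ∃ y ∈ B, ∀ b ∈ B, ‖x - y‖ ≤ ‖x - b‖ := by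
  set f : WeakSpace ℝ X → ℝ := fun z => ‖ofWeak (toWeakSpace ℝ X x - z)‖ with hf
  have hlsc : LowerSemicontinuous f := by
    intro z c hc
    have hcont : Continuous fun z : WeakSpace ℝ X => toWeakSpace ℝ X x - z :=
      continuous_const.sub continuous_id
    exact (hcont.tendsto z).eventually (lsc_norm_weak _ c hc)
  obtain ⟨z, hz, hmin⟩ := lsc_exists_min hlsc (fun z => norm_nonneg _) hBw (hBne.image _)
  obtain ⟨y, hy, rfl⟩ := hz
  have heq : ∀ w z : X, ofWeak (toWeakSpace ℝ X w - toWeakSpace ℝ X z) = w - z := by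
    intro w z; simp [ofWeak, map_sub]
  refine ⟨y, hy, fun b hb => ?_⟩
  have := hmin (toWeakSpace ℝ X b) ⟨b, hb, rfl⟩
  simpa only [hf, heq] using this

section Prox

variable {A B : Set X}

theorem mate_mem_proxSubB {x y : X} (hx : x ∈ A) (hy : y ∈ B)
    (hxy : ‖x - y‖ = pairDist A B) : y ∈ proxSubB A B := ⟨hy, x, hx, hxy⟩

theorem mate_mem_proxSubA {x y : X} (hx : x ∈ A) (hy : y ∈ B)
    (hxy : ‖x - y‖ = pairDist A B) : x ∈ proxSubA A B := ⟨hx, y, hy, hxy⟩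

theorem proxSubA_nonempty (hAw : WeaklyCompact A) (hBw : WeaklyCompact B)
    (hAne : A.Nonempty) (hBne : B.Nonempty) : (proxSubA A B).Nonempty := by
  obtain ⟨x, hx, y, hy, hxy⟩ := exists_pairDist_attained hAw hBw hAne hBne
  exact ⟨x, mate_mem_proxSubA hx hy hxy⟩

theorem proxSubB_nonempty (hAw : WeaklyCompact A) (hBw : WeaklyCompact B)
    (hAne : A.Nonempty) (hBne : B.Nonempty) : (proxSubB A B).Nonempty := by
  obtain ⟨x, hx, y, hy, hxy⟩ := exists_pairDist_attained hAw hBw hAne hBne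
  exact ⟨y, mate_mem_proxSubB hx hy hxy⟩

theorem proxSubA_convex (hAc : Convex ℝ A) (hBc : Convex ℝ B) : Convex ℝ (proxSubA A B) := by
  rintro x1 ⟨hx1, y1, hy1, h1⟩ x2 ⟨hx2, y2, hy2, h2⟩ s t hs ht hst
  refine ⟨hAc hx1 hx2 hs ht hst, s • y1 + t • y2, hBc hy1 hy2 hs ht hst, ?_⟩
  have hle : ‖(s • x1 + t • x2) - (s • y1 + t • y2)‖ ≤ pairDist A B := by
    have : (s • x1 + t • x2) - (s • y1 + t • y2) = s • (x1 - y1) + t • (x2 - y2) := by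
      module
    rw [this]
    calc ‖s • (x1 - y1) + t • (x2 - y2)‖ ≤ ‖s • (x1 - y1)‖ + ‖t • (x2 - y2)‖ :=
          norm_add_le _ _
    _ = s * ‖x1 - y1‖ + t * ‖x2 - y2‖ := by
          rw [norm_smul, norm_smul, Real.norm_of_nonneg hs, Real.norm_of_nonneg ht]
    _ = pairDist A B := by rw [h1, h2, ← add_mul, hst, one_mul]
  exact le_antisymm hle (pairDist_le' (hAc hx1 hx2 hs ht hst) (hBc hy1 hy2 hs ht hst))

theorem proxSubB_convex (hAc : Convex ℝ A) (hBc : Convex ℝ B) : Convex ℝ (proxSubB A B) := by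
  rintro y1 ⟨hy1, x1, hx1, h1⟩ y2 ⟨hy2, x2, hx2, h2⟩ s t hs ht hst
  refine ⟨hBc hy1 hy2 hs ht hst, s • x1 + t • x2, hAc hx1 hx2 hs ht hst, ?_⟩
  have hle : ‖(s • x1 + t • x2) - (s • y1 + t • y2)‖ ≤ pairDist A B := by
    have : (s • x1 + t • x2) - (s • y1 + t • y2) = s • (x1 - y1) + t • (x2 - y2) := by
      module
    rw [this]
    calc ‖s • (x1 - y1) + t • (x2 - y2)‖ ≤ ‖s • (x1 - y1)‖ + ‖t • (x2 - y2)‖ :=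
          norm_add_le _ _
    _ = s * ‖x1 - y1‖ + t * ‖x2 - y2‖ := by
          rw [norm_smul, norm_smul, Real.norm_of_nonneg hs, Real.norm_of_nonneg ht]
    _ = pairDist A B := by rw [h1, h2, ← add_mul, hst, one_mul]
  exact le_antisymm hle (pairDist_le' (hAc hx1 hx2 hs ht hst) (hBc hy1 hy2 hs ht hst))

theorem proxSubA_isClosed (hAw : WeaklyCompact A) (hBw : WeaklyCompact B)
    (hBne : B.Nonempty) : IsClosed (proxSubA A B) := by
  have heq : proxSubA A B = A ∩ {x | Metric.infDist x B ≤ pairDist A B} := by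
    ext x
    constructor
    · rintro ⟨hx, y, hy, hxy⟩
      refine ⟨hx, ?_⟩
      calc Metric.infDist x B ≤ dist x y := Metric.infDist_le_dist_of_mem hy
      _ = pairDist A B := by rw [dist_eq_norm, hxy]
    · rintro ⟨hx, hinf⟩
      obtain ⟨y, hy, hmin⟩ := exists_nearest hBw hBne x
      refine ⟨hx, y, hy, le_antisymm ?_ (pairDist_le' hx hy)⟩
      calc ‖x - y‖ ≤ Metric.infDist x B := by
            by_contra hlt
            push_neg at hlt
            obtain ⟨b, hb, hdb⟩ := (Metric.infDist_lt_iff hBne).mp hlt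
            rw [dist_eq_norm] at hdb
            exact absurd (hmin b hb) (not_le.mpr hdb)
      _ ≤ pairDist A B := hinf
  rw [heq]
  exact hAw.isClosed.inter (isClosed_le (Metric.continuous_infDist_pt B) continuous_const)

theorem proxSubB_isClosed (hAw : WeaklyCompact A) (hBw : WeaklyCompact B)
    (hAne : A.Nonempty) : IsClosed (proxSubB A B) := by
  have heq : proxSubB A B = B ∩ {y | Metric.infDist y A ≤ pairDist A B} := by
    ext y
    constructor
    · rintro ⟨hy, x, hx, hxy⟩
      refine ⟨hy, ?_⟩
      calc Metric.infDist y A ≤ dist y x := Metric.infDist_le_dist_of_mem hx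
      _ = pairDist A B := by rw [dist_eq_norm, ← hxy, ← neg_sub, norm_neg]
    · rintro ⟨hy, hinf⟩
      obtain ⟨x, hx, hmin⟩ := exists_nearest hAw hAne y
      refine ⟨hy, x, hx, le_antisymm ?_ (pairDist_le' hx hy)⟩
      calc ‖x - y‖ = ‖y - x‖ := by rw [← neg_sub, norm_neg]
      _ ≤ Metric.infDist y A := by
            by_contra hlt
            push_neg at hlt
            obtain ⟨a, ha, hda⟩ := (Metric.infDist_lt_iff hAne).mp hlt
            rw [dist_eq_norm] at hda
            exact absurd (hmin a ha) (not_le.mpr hda)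
      _ ≤ pairDist A B := hinf
  rw [heq]
  exact hBw.isClosed.inter (isClosed_le (Metric.continuous_infDist_pt A) continuous_const)

theorem pairDist_proxSub (hAw : WeaklyCompact A) (hBw : WeaklyCompact B)
    (hAne : A.Nonempty) (hBne : B.Nonempty) :
    pairDist (proxSubA A B) (proxSubB A B) = pairDist A B := by
  obtain ⟨x, hx, y, hy, hxy⟩ := exists_pairDist_attained hAw hBw hAne hBne
  refine le_antisymm ?_ ?_
  · calc pairDist (proxSubA A B) (proxSubB A B) ≤ ‖x - y‖ :=
        pairDist_le' (mate_mem_proxSubA hx hy hxy) (mate_mem_proxSubB hx hy hxy)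
    _ = pairDist A B := hxy
  · exact pairDist_mono ⟨x, mate_mem_proxSubA hx hy hxy⟩ ⟨y, mate_mem_proxSubB hx hy hxy⟩
      (fun z hz => hz.1) (fun z hz => hz.1)

theorem proximinal_proxSub (hAw : WeaklyCompact A) (hBw : WeaklyCompact B)
    (hAne : A.Nonempty) (hBne : B.Nonempty) :
    ProximinalPair (proxSubA A B) (proxSubB A B) := by
  have hd := pairDist_proxSub hAw hBw hAne hBne
  constructor
  · rintro x ⟨hx, y, hy, hxy⟩
    exact ⟨y, mate_mem_proxSubB hx hy hxy, by rw [hd]; exact hxy⟩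
  · rintro y ⟨hy, x, hx, hxy⟩
    exact ⟨x, mate_mem_proxSubA hx hy hxy, by rw [hd]; exact hxy⟩

end Prox

/-- For a nonempty weakly compact convex sharp proximinal pair `(A,B)` and
a cyclic map `T` with `T(A₀) ⊆ B₀` and `T(B₀) ⊆ A₀`, there is a pair `(F1,F2)` of
nonempty closed convex proximinal subsets of `(A₀,B₀)`, cyclically invariant under `T`,
with `d(F1,F2) = d(A,B)`, which is minimal (w.r.t. componentwise inclusion) among all
pairs with these properties. -/
theorem exists_minimal_cyclically_invariant_pair
    {X : Type*} [NormedAddCommGroup X] [NormedSpace ℝ X] [CompleteSpace X]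
    (A B : Set X) (hAne : A.Nonempty) (hBne : B.Nonempty)
    (hAw : WeaklyCompact A) (hBw : WeaklyCompact B)
    (hAc : Convex ℝ A) (hBc : Convex ℝ B)
    (hsharp : SharpProximinalPair A B)
    (T : X → X) (hcyc : IsCyclicMap T A B)
    (hTA0 : MapsTo T (proxSubA A B) (proxSubB A B))
    (hTB0 : MapsTo T (proxSubB A B) (proxSubA A B)) :
    ∃ F1 F2 : Set X, F1.Nonempty ∧ F2.Nonempty ∧
      F1 ⊆ proxSubA A B ∧ F2 ⊆ proxSubB A B ∧
      IsClosed F1 ∧ IsClosed F2 ∧ Convex ℝ F1 ∧ Convex ℝ F2 ∧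
      ProximinalPair F1 F2 ∧ MapsTo T F1 F2 ∧ MapsTo T F2 F1 ∧
      pairDist F1 F2 = pairDist A B ∧
      (∀ E1 E2 : Set X, E1.Nonempty → E2.Nonempty →
        E1 ⊆ proxSubA A B → E2 ⊆ proxSubB A B →
        IsClosed E1 → IsClosed E2 → Convex ℝ E1 → Convex ℝ E2 →
        ProximinalPair E1 E2 → MapsTo T E1 E2 → MapsTo T E2 E1 →
        pairDist E1 E2 = pairDist A B →
        E1 ⊆ F1 → E2 ⊆ F2 → E1 = F1 ∧ E2 = F2) := by
  classical
  have hA0ne : (proxSubA A B).Nonempty := proxSubA_nonempty hAw hBw hAne hBne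
  have hB0ne : (proxSubB A B).Nonempty := proxSubB_nonempty hAw hBw hAne hBne
  have hA0subA : proxSubA A B ⊆ A := fun x hx => hx.1
  have hB0subB : proxSubB A B ⊆ B := fun x hx => hx.1
  have hA0closed : IsClosed (proxSubA A B) := proxSubA_isClosed hAw hBw hBne
  have hB0closed : IsClosed (proxSubB A B) := proxSubB_isClosed hAw hBw hAne
  have hA0conv : Convex ℝ (proxSubA A B) := proxSubA_convex hAc hBc
  have hB0conv : Convex ℝ (proxSubB A B) := proxSubB_convex hAc hBc
  have hdist0 : pairDist (proxSubA A B) (proxSubB A B) = pairDist A B :=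
    pairDist_proxSub hAw hBw hAne hBne
  have hprox0 : ProximinalPair (proxSubA A B) (proxSubB A B) :=
    proximinal_proxSub hAw hBw hAne hBne
  set F : Set (Set X × Set X) := {p | p.1.Nonempty ∧ p.2.Nonempty ∧
    p.1 ⊆ proxSubA A B ∧ p.2 ⊆ proxSubB A B ∧ IsClosed p.1 ∧ IsClosed p.2 ∧
    Convex ℝ p.1 ∧ Convex ℝ p.2 ∧ ProximinalPair p.1 p.2 ∧
    MapsTo T p.1 p.2 ∧ MapsTo T p.2 p.1 ∧ pairDist p.1 p.2 = pairDist A B} with hF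
  have hbase : (proxSubA A B, proxSubB A B) ∈ F :=
    ⟨hA0ne, hB0ne, subset_rfl, subset_rfl, hA0closed, hB0closed, hA0conv, hB0conv,
      hprox0, hTA0, hTB0, hdist0⟩
  -- Zorn's lemma on the dual order
  set F' : Set ((Set X × Set X)ᵒᵈ) := {p | OrderDual.ofDual p ∈ F} with hF'
  have hbase' : OrderDual.toDual (proxSubA A B, proxSubB A B) ∈ F' := hbase
  have hchain : ∀ c ⊆ F', IsChain (· ≤ ·) c →
      ∀ y ∈ c, ∃ ub ∈ F', ∀ z ∈ c, z ≤ ub := by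
    intro c hcF' hchain y hyc
    have hcF : ∀ {p}, p ∈ c → OrderDual.ofDual p ∈ F := fun hp => hcF' hp
    haveI : Nonempty c := ⟨⟨y, hyc⟩⟩
    set q1 : Set X := ⋂ p ∈ c, (OrderDual.ofDual p).1 with hq1
    set q2 : Set X := ⋂ p ∈ c, (OrderDual.ofDual p).2 with hq2
    -- each member's first component is weakly compact
    have hwc : ∀ p ∈ c, WeaklyCompact (OrderDual.ofDual p).1 := by
      intro p hp
      obtain ⟨h1, h2, h3, h4, h5, _⟩ := hcF hp
      exact hAw.of_subset (h3.trans hA0subA) h5 (hcF hp).2.2.2.2.2.2.1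
    -- q1 is nonempty via weak compactness
    have hq1ne : q1.Nonempty := by
      set t : c → Set (WeakSpace ℝ X) := fun p => toWeakSpace ℝ X '' (OrderDual.ofDual (p : (Set X × Set X)ᵒᵈ)).1
        with htdef
      have htc : ∀ p : c, IsCompact (t p) := fun p => hwc p p.2
      have htcl : ∀ p : c, IsClosed (t p) := fun p => (htc p).isClosed
      have htne : ∀ p : c, (t p).Nonempty := fun p => ((hcF p.2).1).image _
      have hdir : Directed (· ⊇ ·) t := by
        intro p q
        rcases hchain.total p.2 q.2 with h | h
        · have h' : OrderDual.ofDual (q : (Set X × Set X)ᵒᵈ) ≤ OrderDual.ofDual (p : (Set X × Set X)ᵒᵈ) := h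
          exact ⟨q, Set.image_mono h'.1, subset_rfl⟩
        · have h' : OrderDual.ofDual (p : (Set X × Set X)ᵒᵈ) ≤ OrderDual.ofDual (q : (Set X × Set X)ᵒᵈ) := h
          exact ⟨p, subset_rfl, Set.image_mono h'.1⟩
      obtain ⟨z, hz⟩ := IsCompact.nonempty_iInter_of_directed_nonempty_isCompact_isClosed
        t hdir htne htc htcl
      refine ⟨ofWeak z, ?_⟩
      simp only [hq1, Set.mem_iInter]
      intro p hp
      have hzp : z ∈ t ⟨p, hp⟩ := by
        simp only [Set.mem_iInter] at hz
        exact hz ⟨p, hp⟩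
      obtain ⟨w, hw, hwz⟩ := hzp
      have : ofWeak z = w := by rw [← hwz]; simp [ofWeak]
      rwa [this]
    -- each point of q1 has its unique mate in q2
    have hmate1 : ∀ x ∈ q1, ∃ y ∈ q2, ‖x - y‖ = pairDist A B := by
      intro x hx
      have hxc : ∀ p ∈ c, x ∈ (OrderDual.ofDual p).1 := by
        simp only [hq1, Set.mem_iInter] at hx; exact hx
      have hxA : x ∈ A := hA0subA ((hcF hyc : OrderDual.ofDual y ∈ F).2.2.1 (hxc y hyc))
      obtain ⟨y0, ⟨hy0B, hy0d⟩, hy0uniq⟩ := hsharp.1 x hxA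
      refine ⟨y0, ?_, hy0d⟩
      simp only [hq2, Set.mem_iInter]
      intro p hp
      obtain ⟨-, -, -, hp2sub, -, -, -, -, hprox, -, -, hpd⟩ := hcF hp
      obtain ⟨yp, hyp, hypd⟩ := hprox.1 x (hxc p hp)
      have : yp = y0 := hy0uniq yp ⟨hB0subB (hp2sub hyp), by rw [hypd, hpd]⟩
      rwa [← this]
    have hmate2 : ∀ y ∈ q2, ∃ x ∈ q1, ‖x - y‖ = pairDist A B := by
      intro z hz
      have hzc : ∀ p ∈ c, z ∈ (OrderDual.ofDual p).2 := by
        simp only [hq2, Set.mem_iInter] at hz; exact hz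
      have hzB : z ∈ B := hB0subB ((hcF hyc : OrderDual.ofDual y ∈ F).2.2.2.1 (hzc y hyc))
      obtain ⟨x0, ⟨hx0A, hx0d⟩, hx0uniq⟩ := hsharp.2 z hzB
      refine ⟨x0, ?_, hx0d⟩
      simp only [hq1, Set.mem_iInter]
      intro p hp
      obtain ⟨-, -, hp1sub, -, -, -, -, -, hprox, -, -, hpd⟩ := hcF hp
      obtain ⟨xp, hxp, hxpd⟩ := hprox.2 z (hzc p hp)
      have : xp = x0 := hx0uniq xp ⟨hA0subA (hp1sub hxp), by rw [hxpd, hpd]⟩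
      rwa [← this]
    have hq2ne : q2.Nonempty := by
      obtain ⟨x, hx⟩ := hq1ne
      obtain ⟨yy, hyy, -⟩ := hmate1 x hx
      exact ⟨yy, hyy⟩
    have hq1subA0 : q1 ⊆ proxSubA A B := fun x hx => by
      simp only [hq1, Set.mem_iInter] at hx
      exact (hcF hyc : OrderDual.ofDual y ∈ F).2.2.1 (hx y hyc)
    have hq2subB0 : q2 ⊆ proxSubB A B := fun x hx => by
      simp only [hq2, Set.mem_iInter] at hx
      exact (hcF hyc : OrderDual.ofDual y ∈ F).2.2.2.1 (hx y hyc)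
    have hqd : pairDist q1 q2 = pairDist A B := by
      obtain ⟨x, hx⟩ := id hq1ne
      obtain ⟨yy, hyy, hxy⟩ := hmate1 x hx
      refine le_antisymm (by calc pairDist q1 q2 ≤ ‖x - yy‖ := pairDist_le' hx hyy
        _ = pairDist A B := hxy) ?_
      exact pairDist_mono hq1ne hq2ne (hq1subA0.trans hA0subA) (hq2subB0.trans hB0subB)
    have hqF : ((q1, q2) : Set X × Set X) ∈ F := by
      refine ⟨hq1ne, hq2ne, hq1subA0, hq2subB0,
        isClosed_biInter (fun p hp => (hcF hp).2.2.2.2.1),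
        isClosed_biInter (fun p hp => (hcF hp).2.2.2.2.2.1),
        convex_iInter₂ (fun p hp => (hcF hp).2.2.2.2.2.2.1),
        convex_iInter₂ (fun p hp => (hcF hp).2.2.2.2.2.2.2.1),
        ⟨fun x hx => by obtain ⟨yy, h1, h2⟩ := hmate1 x hx; exact ⟨yy, h1, by rw [h2, hqd]⟩,
         fun z hz => by obtain ⟨xx, h1, h2⟩ := hmate2 z hz; exact ⟨xx, h1, by rw [h2, hqd]⟩⟩,
        ?_, ?_, hqd⟩
      · intro x hx
        simp only [hq1, Set.mem_iInter] at hx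
        simp only [hq2, Set.mem_iInter]
        intro p hp
        exact (hcF hp).2.2.2.2.2.2.2.2.2.1 (hx p hp)
      · intro x hx
        simp only [hq2, Set.mem_iInter] at hx
        simp only [hq1, Set.mem_iInter]
        intro p hp
        exact (hcF hp).2.2.2.2.2.2.2.2.2.2.1 (hx p hp)
    refine ⟨OrderDual.toDual ((q1, q2) : Set X × Set X), hqF, ?_⟩
    intro z hzc
    rw [OrderDual.le_toDual]
    exact ⟨Set.biInter_subset_of_mem hzc, Set.biInter_subset_of_mem hzc⟩
  obtain ⟨m, -, hmF, hmax⟩ := zorn_le_nonempty₀ F' hchain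
    (OrderDual.toDual (proxSubA A B, proxSubB A B)) hbase'
  obtain ⟨hm1ne, hm2ne, hm1sub, hm2sub, hm1cl, hm2cl, hm1cv, hm2cv, hmprox, hmT1, hmT2, hmd⟩
    := hmF
  refine ⟨(OrderDual.ofDual m).1, (OrderDual.ofDual m).2, hm1ne, hm2ne, hm1sub, hm2sub,
    hm1cl, hm2cl, hm1cv, hm2cv, hmprox, hmT1, hmT2, hmd, ?_⟩
  intro E1 E2 hE1ne hE2ne hE1sub hE2sub hE1cl hE2cl hE1cv hE2cv hEprox hET1 hET2 hEd hEF1 hEF2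
  have hEF : OrderDual.toDual ((E1, E2) : Set X × Set X) ∈ F' :=
    ⟨hE1ne, hE2ne, hE1sub, hE2sub, hE1cl, hE2cl, hE1cv, hE2cv, hEprox, hET1, hET2, hEd⟩
  have hle : m ≤ OrderDual.toDual ((E1, E2) : Set X × Set X) := by
    rw [OrderDual.le_toDual]
    exact ⟨hEF1, hEF2⟩
  have hge := hmax hEF hle
  rw [OrderDual.toDual_le] at hge
  exact ⟨le_antisymm hEF1 hge.1, le_antisymm hEF2 hge.2⟩

end
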